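/- In the truncated tensor algebra of truncation level 2, for group-like elements x₁,...,x_N the barycenter has the closed form: level-1 component (1/N) Σ_i x_i^{(1)}, and level-2 component (1/N) Σ_i x_i^{(2)} - (1/(2N)) Σ_i x_i^{(1)} ⊗ x_i^{(1)} + (1/(2N²)) Σ_{i₁,i₂} x_{i₁}^{(1)} ⊗ x_{i₂}^{(1)}. That is, this element m satisfies Σ_i log(m^{-1} x_i) = 0. -/

import Mathlib

open Matrix

/-- The truncated tensor algebra `T_{d,2} = ℝ ⊕ ℝ^d ⊕ ℝ^{d×d}`: a constant term,
a level-1 vector and a level-2 matrix. -/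
structure T2 (d : ℕ) where
  c : ℝ
  v : Fin d → ℝ
  M : Matrix (Fin d) (Fin d) ℝ

namespace T2

variable {d : ℕ}

/-- Truncated tensor multiplication in `T_{d,2}` (products of total level > 2 vanish). -/
noncomputable def mul (x y : T2 d) : T2 d where
  c := x.c * y.c
  v := x.c • y.v + y.c • x.v
  M := x.c • y.M + y.c • x.M + Matrix.vecMulVec x.v y.v

/-- The inverse of a group-like element (constant term 1) in `T_{d,2}`. -/
noncomputable def inv (x : T2 d) : T2 d where
  c := 1
  v := -x.v
  M := -x.M + Matrix.vecMulVec x.v x.v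

/-- The truncated logarithm `log x = (x-1) - (1/2)(x-1)^⊗2` of an element with
constant term 1. -/
noncomputable def log (x : T2 d) : T2 d where
  c := 0
  v := x.v
  M := x.M - (1 / 2 : ℝ) • Matrix.vecMulVec x.v x.v

/-- Group-like: constant term 1 and the (level-2) shuffle relations
`x⁽¹⁾ ⊗ x⁽¹⁾ = x⁽²⁾ + (x⁽²⁾)ᵀ`. -/
def IsGroupLike (x : T2 d) : Prop :=
  x.c = 1 ∧ x.M + x.Mᵀ = Matrix.vecMulVec x.v x.v

end T2

/-! At level 2, for `y` with constant term 1,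
`log (m⁻¹ y) = log y - log m + ½ (y⁽¹⁾ ⊗ m⁽¹⁾ - m⁽¹⁾ ⊗ y⁽¹⁾)`.
Summed over the `xᵢ`, the antisymmetric term vanishes as soon as `m⁽¹⁾` is the mean of the
`xᵢ⁽¹⁾`, so `m` is a barycenter whenever `log m` is the mean of the `log xᵢ`; the closed form
is exactly the `m` with this property. -/

namespace Matrix

variable {ι m n α : Type*} [NonUnitalNonAssocSemiring α]

theorem sum_vecMulVec (s : Finset ι) (u : ι → m → α) (w : n → α) :
    ∑ i ∈ s, vecMulVec (u i) w = vecMulVec (∑ i ∈ s, u i) w := by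
  ext a b
  simp only [sum_apply, vecMulVec_apply, Finset.sum_apply, Finset.sum_mul]

theorem vecMulVec_sum (s : Finset ι) (w : m → α) (u : ι → n → α) :
    ∑ i ∈ s, vecMulVec w (u i) = vecMulVec w (∑ i ∈ s, u i) := by
  ext a b
  simp only [sum_apply, vecMulVec_apply, Finset.sum_apply, Finset.mul_sum]

end Matrix

namespace T2

variable {d : ℕ}

@[simp]
theorem log_c (x : T2 d) : (log x).c = 0 := rfl

@[simp]
theorem log_v (x : T2 d) : (log x).v = x.v := rfl

theorem log_inv_mul_v (m : T2 d) {y : T2 d} (hy : y.c = 1) :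
    (log (mul (inv m) y)).v = y.v - m.v := by
  simp only [log, mul, inv, hy, one_smul, sub_eq_add_neg]

theorem log_inv_mul_M (m : T2 d) {y : T2 d} (hy : y.c = 1) :
    (log (mul (inv m) y)).M
      = (log y).M - (log m).M + (1 / 2 : ℝ) • (vecMulVec y.v m.v - vecMulVec m.v y.v) := by
  simp only [log, mul, inv, hy, one_smul, add_vecMulVec, vecMulVec_add, neg_vecMulVec,
    vecMulVec_neg]
  module

variable {ι : Type*} [Fintype ι]

theorem sum_log_inv_mul_v (m : T2 d) {x : ι → T2 d} (hx : ∀ i, (x i).c = 1) :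
    ∑ i, (log (mul (inv m) (x i))).v = ∑ i, (x i).v - (Fintype.card ι : ℝ) • m.v := by
  simp only [log_inv_mul_v m (hx _), Finset.sum_sub_distrib, Finset.sum_const,
    Finset.card_univ, Nat.cast_smul_eq_nsmul]

theorem sum_log_inv_mul_M (m : T2 d) {x : ι → T2 d} (hx : ∀ i, (x i).c = 1) :
    ∑ i, (log (mul (inv m) (x i))).M
      = ∑ i, (log (x i)).M - (Fintype.card ι : ℝ) • (log m).M
        + (1 / 2 : ℝ) • (vecMulVec (∑ i, (x i).v) m.v - vecMulVec m.v (∑ i, (x i).v)) := by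
  simp only [log_inv_mul_M m (hx _), Finset.sum_add_distrib, Finset.sum_sub_distrib,
    ← Finset.smul_sum, Finset.sum_const, Finset.card_univ, Nat.cast_smul_eq_nsmul,
    sum_vecMulVec, vecMulVec_sum]

theorem sum_log_inv_mul_eq_zero_of_log_eq_mean [Nonempty ι] {m : T2 d} {x : ι → T2 d}
    (hx : ∀ i, (x i).c = 1)
    (hv : (log m).v = (Fintype.card ι : ℝ)⁻¹ • ∑ i, (log (x i)).v)
    (hM : (log m).M = (Fintype.card ι : ℝ)⁻¹ • ∑ i, (log (x i)).M) :
    ∑ i, (log (mul (inv m) (x i))).v = 0 ∧ ∑ i, (log (mul (inv m) (x i))).M = 0 := by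
  have hcard : (Fintype.card ι : ℝ) ≠ 0 := Nat.cast_ne_zero.mpr Fintype.card_ne_zero
  simp only [log_v] at hv
  constructor
  · rw [sum_log_inv_mul_v m hx, hv, smul_smul, mul_inv_cancel₀ hcard, one_smul, sub_self]
  · rw [sum_log_inv_mul_M m hx, hM, smul_smul, mul_inv_cancel₀ hcard, one_smul, sub_self,
      zero_add, hv, vecMulVec_smul, smul_vecMulVec, sub_self, smul_zero]

end T2

theorem barycenter_closed_form_level2_general (d N : ℕ) (hN : 0 < N)
    (x : Fin N → T2 d) (hx : ∀ i, (x i).IsGroupLike)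
    (m : T2 d)
    (hv : m.v = (1 / (N : ℝ)) • ∑ i, (x i).v)
    (hM : m.M = (1 / (N : ℝ)) • ∑ i, (x i).M
        - (1 / (2 * (N : ℝ))) • ∑ i, Matrix.vecMulVec (x i).v (x i).v
        + (1 / (2 * (N : ℝ) ^ 2)) • ∑ i₁, ∑ i₂, Matrix.vecMulVec (x i₁).v (x i₂).v) :
    (∑ i, (T2.log (T2.mul (T2.inv m) (x i))).c = 0) ∧
    (∑ i, (T2.log (T2.mul (T2.inv m) (x i))).v = 0) ∧
    (∑ i, (T2.log (T2.mul (T2.inv m) (x i))).M = 0) := by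
  have : Nonempty (Fin N) := Fin.pos_iff_nonempty.mp hN
  simp only [Matrix.sum_vecMulVec, Matrix.vecMulVec_sum] at hM
  have hlog_M : (T2.log m).M = (Fintype.card (Fin N) : ℝ)⁻¹ • ∑ i, (T2.log (x i)).M := by
    simp only [T2.log, Fintype.card_fin, hM, hv, Finset.sum_sub_distrib, ← Finset.smul_sum,
      smul_vecMulVec, vecMulVec_smul, one_div]
    module
  refine ⟨by simp only [T2.log_c, Finset.sum_const_zero], ?_⟩
  exact T2.sum_log_inv_mul_eq_zero_of_log_eq_mean (fun i => (hx i).1)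
    (by simpa [one_div] using hv) hlog_M

/-- In truncation level 2, the barycenter of group-like `x₁,…,x_N` has the closed form:
level-1 component `(1/N) Σ_i x_i⁽¹⁾`, level-2 component
`(1/N) Σ_i x_i⁽²⁾ - (1/(2N)) Σ_i x_i⁽¹⁾⊗x_i⁽¹⁾ + (1/(2N²)) Σ_{i₁,i₂} x_{i₁}⁽¹⁾⊗x_{i₂}⁽¹⁾`.
That is, this element `m` satisfies `Σ_i log(m⁻¹ x_i) = 0` (in all levels). -/
theorem barycenter_closed_form_level2 (d N : ℕ) (hN : 0 < N)
    (x : Fin N → T2 d) (hx : ∀ i, (x i).IsGroupLike)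
    (m : T2 d) (hc : m.c = 1)
    (hv : m.v = (1 / (N : ℝ)) • ∑ i, (x i).v)
    (hM : m.M = (1 / (N : ℝ)) • ∑ i, (x i).M
        - (1 / (2 * (N : ℝ))) • ∑ i, Matrix.vecMulVec (x i).v (x i).v
        + (1 / (2 * (N : ℝ) ^ 2)) • ∑ i₁, ∑ i₂, Matrix.vecMulVec (x i₁).v (x i₂).v) :
    (∑ i, (T2.log (T2.mul (T2.inv m) (x i))).c = 0) ∧
    (∑ i, (T2.log (T2.mul (T2.inv m) (x i))).v = 0) ∧
    (∑ i, (T2.log (T2.mul (T2.inv m) (x i))).M = 0) :=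
  barycenter_closed_form_level2_general d N hN x hx m hv hM
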